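/- arXiv:2304.01218 — 4 statements merged into one kernel-verified Lean document; each statement's English description precedes it below -/
import Mathlib

section
/- For any order k ≥ 1, the Bernstein polynomial of a convex continuous function f on [a,b] satisfies f(x) ≤ p_k(x) for all x in [a,b]. -/
open Set

noncomputable def bern (f : ℝ → ℝ) (a b : ℝ) (k : ℕ) (x : ℝ) : ℝ :=
  ∑ i ∈ Finset.range (k + 1),
    f (a + (i / k : ℝ) * (b - a)) * (k.choose i : ℝ) *
      ((x - a) / (b - a)) ^ i * ((b - x) / (b - a)) ^ (k - i)

noncomputable def relu (x : ℝ) : ℝ := max x 0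

/-! The Bernstein weights `B_{k,i}(t) = C(k,i) tⁱ (1-t)ᵏ⁻ⁱ` form a probability distribution on the
nodes `i/k` whose mean is `t`. Hence `p_k(x) = ∑ B_{k,i}(t) f(a + (i/k)(b-a))` with
`x = a + t(b-a)` dominates `f(x)` by Jensen's inequality. -/

open Polynomial AffineMap

namespace bernsteinPolynomial

theorem eval_nonneg {R : Type*} [CommRing R] [PartialOrder R] [IsOrderedRing R]
    (k i : ℕ) {t : R} (ht : t ∈ Icc 0 1) : 0 ≤ (bernsteinPolynomial R k i).eval t := by
  simp only [bernsteinPolynomial, eval_mul, eval_pow, eval_sub, eval_one, eval_X, eval_natCast]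
  exact mul_nonneg (mul_nonneg (Nat.cast_nonneg _) (pow_nonneg ht.1 _))
    (pow_nonneg (sub_nonneg.2 ht.2) _)

theorem sum_eval {R : Type*} [CommRing R] (k : ℕ) (t : R) :
    ∑ i ∈ Finset.range (k + 1), (bernsteinPolynomial R k i).eval t = 1 := by
  simpa [eval_finsetSum] using congrArg (eval t) (bernsteinPolynomial.sum R k)

theorem sum_eval_mul_div {K : Type*} [Field K] [CharZero K] {k : ℕ} (hk : k ≠ 0) (t : K) :
    ∑ i ∈ Finset.range (k + 1), (bernsteinPolynomial K k i).eval t * ((i : K) / k) = t := by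
  have hmean := congrArg (eval t) (bernsteinPolynomial.sum_smul K k)
  simp only [eval_finsetSum, nsmul_eq_mul, eval_mul, eval_natCast, eval_X] at hmean
  calc ∑ i ∈ Finset.range (k + 1), (bernsteinPolynomial K k i).eval t * ((i : K) / k)
      = (∑ i ∈ Finset.range (k + 1), (i : K) * (bernsteinPolynomial K k i).eval t) / k := by
        rw [Finset.sum_div]
        exact Finset.sum_congr rfl fun i _ => by ring
    _ = t := by
        rw [hmean]
        field_simp

end bernsteinPolynomial

theorem ConvexOn.le_sum_bernsteinPolynomial_eval_smul
    {𝕜 E : Type*} [Field 𝕜] [LinearOrder 𝕜] [IsStrictOrderedRing 𝕜]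
    [AddCommGroup E] [Module 𝕜 E] {f : E → 𝕜} {a b : E}
    (hf : ConvexOn 𝕜 (segment 𝕜 a b) f) {k : ℕ} (hk : k ≠ 0) {t : 𝕜} (ht : t ∈ Icc 0 1) :
    f (lineMap a b t) ≤ ∑ i ∈ Finset.range (k + 1),
      (bernsteinPolynomial 𝕜 k i).eval t • f (lineMap a b ((i : 𝕜) / k)) := by
  set w : ℕ → 𝕜 := fun i => (bernsteinPolynomial 𝕜 k i).eval t
  have hw1 : ∑ i ∈ Finset.range (k + 1), w i = 1 := bernsteinPolynomial.sum_eval k t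
  have hnodes : ∀ i ∈ Finset.range (k + 1), lineMap a b ((i : 𝕜) / k) ∈ segment 𝕜 a b := by
    intro i hi
    refine lineMap_mem_segment 𝕜 a b ⟨by positivity, div_le_one_of_le₀ ?_ (Nat.cast_nonneg k)⟩
    exact_mod_cast Nat.lt_succ_iff.mp (Finset.mem_range.mp hi)
  have hbarycentre :
      ∑ i ∈ Finset.range (k + 1), w i • lineMap a b ((i : 𝕜) / k) = lineMap a b t := by
    have h := (Finset.range (k + 1)).map_affineCombination (fun i : ℕ => (i : 𝕜) / k) w hw1
      (lineMap a b)
    simp only [Finset.affineCombination_eq_linear_combination _ _ _ hw1, smul_eq_mul,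
      Function.comp_apply] at h
    exact h.symm.trans (congrArg _ (bernsteinPolynomial.sum_eval_mul_div hk t))
  have := hf.map_sum_le (fun i _ => bernsteinPolynomial.eval_nonneg k i ht) hw1 hnodes
  rwa [hbarycentre] at this

theorem bern_eq_sum_bernsteinPolynomial_eval_smul (f : ℝ → ℝ) {a b : ℝ} (hab : a ≠ b)
    (k : ℕ) (x : ℝ) :
    bern f a b k x = ∑ i ∈ Finset.range (k + 1),
      (bernsteinPolynomial ℝ k i).eval ((x - a) / (b - a)) • f (lineMap a b ((i : ℝ) / k)) := by
  have hba : b - a ≠ 0 := sub_ne_zero.2 hab.symm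
  have hcompl : (b - x) / (b - a) = 1 - (x - a) / (b - a) := by field_simp; ring
  refine Finset.sum_congr rfl fun i _ => ?_
  simp only [hcompl, bernsteinPolynomial, eval_mul, eval_pow, eval_sub, eval_one, eval_X,
    eval_natCast, lineMap_apply_ring', smul_eq_mul, add_comm _ a]
  ring

theorem bernstein_ge_convex_general (f : ℝ → ℝ) (a b : ℝ) (k : ℕ)
    (hab : a < b) (hk : 1 ≤ k)
    (hconv : ConvexOn ℝ (Icc a b) f) :
    ∀ x ∈ Icc a b, f x ≤ bern f a b k x := by
  intro x hx
  have hba : 0 < b - a := sub_pos.2 hab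
  set t := (x - a) / (b - a)
  have ht : t ∈ Icc 0 1 :=
    ⟨div_nonneg (sub_nonneg.2 hx.1) hba.le, (div_le_one hba).2 (sub_le_sub_right hx.2 a)⟩
  have hxt : lineMap a b t = x := by
    rw [lineMap_apply_ring', div_mul_cancel₀ _ hba.ne', sub_add_cancel]
  rw [← segment_eq_Icc hab.le] at hconv
  calc f x = f (lineMap a b t) := by rw [hxt]
    _ ≤ _ := hconv.le_sum_bernsteinPolynomial_eval_smul (by omega) ht
    _ = bern f a b k x := (bern_eq_sum_bernsteinPolynomial_eval_smul f hab.ne k x).symm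

theorem bernstein_ge_convex (f : ℝ → ℝ) (a b : ℝ) (k : ℕ)
    (hab : a < b) (hk : 1 ≤ k)
    (hcont : ContinuousOn f (Icc a b))
    (hconv : ConvexOn ℝ (Icc a b) f) :
    ∀ x ∈ Icc a b, f x ≤ bern f a b k x :=
  bernstein_ge_convex_general f a b k hab hk hconv
end

section
/- For a convex continuous function f on [a,b], the Bernstein polynomials are monotonically decreasing in order: p_{k+1}(x) ≤ p_k(x) for all x in [a,b] and all k ≥ 1. -/
open Set

/-!
Rescale to `[0, 1]` and write `t = (x - a)/(b - a)`, `s = 1 - t`. Multiplying `p_k` by `t + s = 1`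
(degree elevation) expresses it in the degree `k + 1` basis `t ^ j * s ^ (k + 1 - j)` with
coefficients `C(k, j-1) f((j-1)/k) + C(k, j) f(j/k)`. By Pascal's rule the weights
`C(k, j-1)` and `C(k, j)` add up to `C(k+1, j)`, and the corresponding barycentre of the nodes
`(j-1)/k` and `j/k` is `j/(k+1)`, so Jensen's inequality bounds each coefficient of `p_{k+1}` by the
corresponding elevated coefficient of `p_k`.
-/

open Finset (range sum_range_succ sum_range_succ' sum_mul sum_congr sum_add_distrib
  mem_range_succ_iff)

theorem ConvexOn.comp_add_mul_sub {f : ℝ → ℝ} {a b : ℝ} (hab : a ≤ b)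
    (hf : ConvexOn ℝ (Icc a b) f) : ConvexOn ℝ (Icc 0 1) (fun u ↦ f (a + u * (b - a))) := by
  have hmem {u : ℝ} (hu : u ∈ Icc (0 : ℝ) 1) : a + u * (b - a) ∈ Icc a b := by
    constructor <;> nlinarith [hu.1, hu.2]
  refine ⟨convex_Icc 0 1, fun u hu v hv p q hp hq hpq ↦ ?_⟩
  convert hf.2 (hmem hu) (hmem hv) hp hq hpq using 2
  simp only [smul_eq_mul]
  linear_combination (-a) * hpq

theorem sum_mul_pow_mul_pow_mul_add {R : Type*} [CommSemiring R] (c : ℕ → R) (t s : R) (k : ℕ)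
    (hc : c (k + 1) = 0) :
    (∑ i ∈ range (k + 1), c i * t ^ i * s ^ (k - i)) * (t + s) =
      c 0 * s ^ (k + 1) + ∑ j ∈ range (k + 1), (c j + c (j + 1)) * t ^ (j + 1) * s ^ (k - j) := by
  have shift : (∑ i ∈ range (k + 1), c i * t ^ i * s ^ (k - i)) * s =
      c 0 * s ^ (k + 1) + ∑ j ∈ range (k + 1), c (j + 1) * t ^ (j + 1) * s ^ (k - j) := by
    have := sum_range_succ' (fun i ↦ c i * t ^ i * s ^ (k + 1 - i)) (k + 1)
    rw [sum_range_succ, hc, zero_mul, zero_mul, add_zero] at this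
    rw [sum_mul, sum_congr rfl fun i hi ↦ ?_]
    · simpa [add_comm] using this
    rw [Finset.mem_range] at hi
    rw [mul_assoc, ← pow_succ, Nat.sub_add_comm (by omega)]
  rw [mul_add, shift, sum_mul, add_left_comm, ← sum_add_distrib]
  congr 1
  exact sum_congr rfl fun j _ ↦ by ring

theorem natCast_div_mem_Icc {i k : ℕ} (h : i ≤ k) : (i / k : ℝ) ∈ Icc (0 : ℝ) 1 :=
  ⟨by positivity, div_le_one_of_le₀ (by exact_mod_cast h) (by positivity)⟩

theorem ConvexOn.mul_choose_succ_le {g : ℝ → ℝ} (hg : ConvexOn ℝ (Icc 0 1) g) {k j : ℕ}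
    (hk : k ≠ 0) (hj : j ≤ k) :
    g ((j + 1 : ℕ) / (k + 1 : ℕ)) * ((k + 1).choose (j + 1) : ℝ) ≤
      g (j / k) * k.choose j + g ((j + 1 : ℕ) / k) * k.choose (j + 1) := by
  obtain rfl | hjk := hj.eq_or_lt
  · simp [Nat.choose_succ_self, div_self, hk, Nat.cast_add_one_ne_zero]
  have hk' : (k : ℝ) ≠ 0 := by exact_mod_cast hk
  have hjk' : (j : ℝ) + 1 ≤ k := by exact_mod_cast hjk
  set p : ℝ := (j + 1) / (k + 1) with hp
  set q : ℝ := (k - j) / (k + 1) with hq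
  have hpq : p + q = 1 := by rw [hp, hq]; field_simp; ring
  have hleft : (k.choose j : ℝ) = p * (k + 1).choose (j + 1) := by
    have h : ((k : ℝ) + 1) * k.choose j = (k + 1).choose (j + 1) * (j + 1) := by
      exact_mod_cast Nat.add_one_mul_choose_eq k j
    rw [hp]
    field_simp
    linear_combination h
  have hright : (k.choose (j + 1) : ℝ) = q * (k + 1).choose (j + 1) := by
    have pascal : ((k + 1).choose (j + 1) : ℝ) = k.choose j + k.choose (j + 1) := by
      exact_mod_cast Nat.choose_succ_succ' k j
    linear_combination -pascal - hleft - ((k + 1).choose (j + 1) : ℝ) * hpq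
  have hmid : ((j + 1 : ℕ) / (k + 1 : ℕ) : ℝ) = p * (j / k) + q * ((j + 1 : ℕ) / k) := by
    rw [hp, hq]
    push_cast
    field_simp
    ring
  have hjensen : g (p * (j / k) + q * ((j + 1 : ℕ) / k)) ≤ p * g (j / k) + q * g ((j + 1 : ℕ) / k) :=
    hg.2 (natCast_div_mem_Icc hj) (natCast_div_mem_Icc hjk) (by positivity)
      (div_nonneg (by linarith) (by positivity)) hpq
  rw [hmid, hleft, hright]
  calc _ ≤ (p * g (j / k) + q * g ((j + 1 : ℕ) / k)) * (k + 1).choose (j + 1) := by gcongr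
    _ = _ := by ring

theorem ConvexOn.sum_mul_choose_succ_le {g : ℝ → ℝ} (hg : ConvexOn ℝ (Icc 0 1) g) {k : ℕ}
    (hk : k ≠ 0) {t s : ℝ} (ht : 0 ≤ t) (hs : 0 ≤ s) (hts : t + s = 1) :
    ∑ i ∈ range (k + 2), g (i / (k + 1 : ℕ)) * (k + 1).choose i * t ^ i * s ^ (k + 1 - i) ≤
      ∑ i ∈ range (k + 1), g (i / k) * k.choose i * t ^ i * s ^ (k - i) := by
  set c : ℕ → ℝ := fun i ↦ g (i / k) * k.choose i
  calc _ = c 0 * s ^ (k + 1) + ∑ j ∈ range (k + 1),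
          g ((j + 1 : ℕ) / (k + 1 : ℕ)) * (k + 1).choose (j + 1) * t ^ (j + 1) * s ^ (k - j) := by
        rw [sum_range_succ', add_comm]
        simp [c]
    _ ≤ c 0 * s ^ (k + 1) + ∑ j ∈ range (k + 1), (c j + c (j + 1)) * t ^ (j + 1) * s ^ (k - j) := by
        gcongr with j hj
        exact hg.mul_choose_succ_le hk (mem_range_succ_iff.1 hj)
    _ = (∑ i ∈ range (k + 1), c i * t ^ i * s ^ (k - i)) * (t + s) :=
        (sum_mul_pow_mul_pow_mul_add c t s k (by simp [c, Nat.choose_succ_self])).symm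
    _ = _ := by rw [hts, mul_one]

theorem bernstein_antitone_in_order_general (f : ℝ → ℝ) (a b : ℝ) (k : ℕ)
    (hab : a < b) (hk : 1 ≤ k)
    (hconv : ConvexOn ℝ (Icc a b) f) :
    ∀ x ∈ Icc a b, bern f a b (k + 1) x ≤ bern f a b k x := by
  intro x hx
  have hba : 0 < b - a := sub_pos.2 hab
  have hts : (x - a) / (b - a) + (b - x) / (b - a) = 1 := by
    rw [← add_div, div_eq_one_iff_eq hba.ne']
    ring
  exact (hconv.comp_add_mul_sub hab.le).sum_mul_choose_succ_le (by omega)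
    (div_nonneg (sub_nonneg.2 hx.1) hba.le) (div_nonneg (sub_nonneg.2 hx.2) hba.le) hts

theorem bernstein_antitone_in_order (f : ℝ → ℝ) (a b : ℝ) (k : ℕ)
    (hab : a < b) (hk : 1 ≤ k)
    (hcont : ContinuousOn f (Icc a b))
    (hconv : ConvexOn ℝ (Icc a b) f) :
    ∀ x ∈ Icc a b, bern f a b (k + 1) x ≤ bern f a b k x :=
  bernstein_antitone_in_order_general f a b k hab hk hconv
end

section
/- If p is the order k ≥ 1 Bernstein polynomial of ReLU on [a,b] with a < 0 < b, then p(x) − ReLU(x) ≤ p(0) for all x in [a,b]. -/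
/-! Since `relu y = y + relu (-y)` and the Bernstein operator reproduces affine functions,
`p x - x` is the Bernstein polynomial of `y ↦ relu (-y)`. The Bernstein operator preserves
monotonicity: the derivative of `∑ wᵥ bₙ₊₁,ᵥ` is `(n + 1) ∑ (wᵥ₊₁ - wᵥ) bₙ,ᵥ`. Hence `p` is
nondecreasing and `p x - x` is nonincreasing on `[a, b]`, which gives `p x - relu x ≤ p 0`
on either side of `0`. -/

open Set

open Polynomial

section BernsteinSum

variable {R : Type*} [CommRing R]

noncomputable def bernsteinSum (n : ℕ) (w : ℕ → R) : R[X] :=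
  ∑ ν ∈ Finset.range (n + 1), w ν • bernsteinPolynomial R n ν

theorem eval_bernsteinPolynomial (n ν : ℕ) (t : R) :
    (bernsteinPolynomial R n ν).eval t = n.choose ν * t ^ ν * (1 - t) ^ (n - ν) := by
  simp [bernsteinPolynomial]

theorem derivative_bernsteinSum_succ (n : ℕ) (w : ℕ → R) :
    derivative (bernsteinSum (n + 1) w)
      = (n + 1 : R[X]) * bernsteinSum n (fun ν => w (ν + 1) - w ν) := by
  have hshift : ∑ ν ∈ Finset.range (n + 1), w (ν + 1) • bernsteinPolynomial R n (ν + 1)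
      = ∑ ν ∈ Finset.range (n + 1), w ν • bernsteinPolynomial R n ν
        - w 0 • bernsteinPolynomial R n 0 := by
    have h := Finset.sum_range_succ' (fun ν => w ν • bernsteinPolynomial R n ν) (n + 1)
    rw [Finset.sum_range_succ, bernsteinPolynomial.eq_zero_of_lt R n.lt_succ_self,
      smul_zero, add_zero] at h
    rw [h, add_sub_cancel_right]
  simp only [bernsteinSum, Finset.sum_range_succ' _ (n + 1), derivative_add, derivative_sum,
    derivative_smul, bernsteinPolynomial.derivative_succ, bernsteinPolynomial.derivative_zero,
    add_tsub_cancel_right, ← mul_smul_comm, smul_sub, ← Finset.mul_sum, Finset.sum_sub_distrib,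
    sub_smul, hshift]
  push_cast
  ring

theorem bernsteinSum_affine (n : ℕ) (c d : R) :
    bernsteinSum n (fun ν => c + ν * d) = C c + C (n * d) * X := by
  have hlin : ∀ ν : ℕ, (ν * d) • bernsteinPolynomial R n ν = d • ν • bernsteinPolynomial R n ν :=
    fun ν => by rw [mul_comm, mul_smul, Nat.cast_smul_eq_nsmul]
  simp only [bernsteinSum, add_smul, Finset.sum_add_distrib, hlin, ← Finset.smul_sum,
    bernsteinPolynomial.sum, bernsteinPolynomial.sum_smul]
  simp only [smul_eq_C_mul, C_mul, mul_one, nsmul_eq_mul, map_natCast]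
  ring

end BernsteinSum

theorem monotoneOn_eval_bernsteinSum {n : ℕ} {w : ℕ → ℝ} (hw : Monotone w) :
    MonotoneOn (fun t => (bernsteinSum n w).eval t) (Icc 0 1) := by
  cases n with
  | zero => simp [bernsteinSum, bernsteinPolynomial, monotoneOn_const]
  | succ n =>
    refine monotoneOn_of_deriv_nonneg (convex_Icc 0 1) (Polynomial.continuousOn _)
      (Polynomial.differentiableOn _) fun t ht => ?_
    rw [interior_Icc] at ht
    rw [Polynomial.deriv, derivative_bernsteinSum_succ, eval_mul, bernsteinSum, eval_finsetSum]
    refine mul_nonneg (by simp only [eval_add, eval_natCast, eval_one]; positivity)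
      (Finset.sum_nonneg fun ν _ => ?_)
    rw [eval_smul, smul_eq_mul, eval_bernsteinPolynomial]
    apply mul_nonneg (sub_nonneg.2 (hw ν.le_succ))
    exact mul_nonneg (mul_nonneg (Nat.cast_nonneg _) (pow_nonneg ht.1.le _))
      (pow_nonneg (sub_nonneg.2 ht.2.le) _)

theorem bern_eq_eval_bernsteinSum (f : ℝ → ℝ) {a b : ℝ} (hab : a ≠ b) (k : ℕ) (x : ℝ) :
    bern f a b k x
      = (bernsteinSum k fun i => f (a + (i / k : ℝ) * (b - a))).eval ((x - a) / (b - a)) := by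
  have hba : (b - x) / (b - a) = 1 - (x - a) / (b - a) := by
    field_simp [sub_ne_zero.2 hab.symm]
    ring
  simp only [bern, bernsteinSum, eval_finsetSum, eval_smul, smul_eq_mul, eval_bernsteinPolynomial,
    hba, mul_assoc]

theorem bern_monotoneOn {f : ℝ → ℝ} (hf : Monotone f) {a b : ℝ} (hab : a < b) (k : ℕ) :
    MonotoneOn (bern f a b k) (Icc a b) := by
  have hba : 0 < b - a := sub_pos.2 hab
  have hmem : ∀ x ∈ Icc a b, (x - a) / (b - a) ∈ Icc (0 : ℝ) 1 := fun x hx =>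
    ⟨div_nonneg (sub_nonneg.2 hx.1) hba.le, (div_le_one hba).2 (sub_le_sub_right hx.2 a)⟩
  intro x hx y hy hxy
  simp only [bern_eq_eval_bernsteinSum f hab.ne]
  refine monotoneOn_eval_bernsteinSum (fun i j hij => hf ?_) (hmem x hx) (hmem y hy) ?_
  · gcongr
  · gcongr

theorem bern_neg (f : ℝ → ℝ) (a b : ℝ) (k : ℕ) (x : ℝ) :
    bern (fun y => -f y) a b k x = -bern f a b k x := by
  simp only [bern, neg_mul, Finset.sum_neg_distrib]

theorem bern_antitoneOn {f : ℝ → ℝ} (hf : Antitone f) {a b : ℝ} (hab : a < b) (k : ℕ) :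
    AntitoneOn (bern f a b k) (Icc a b) := fun x hx y hy hxy => by
  simpa [bern_neg] using bern_monotoneOn hf.neg hab k hx hy hxy

theorem bern_add (f g : ℝ → ℝ) (a b : ℝ) (k : ℕ) (x : ℝ) :
    bern (fun y => f y + g y) a b k x = bern f a b k x + bern g a b k x := by
  simp only [bern, add_mul, Finset.sum_add_distrib]

theorem bern_id {a b : ℝ} (hab : a ≠ b) {k : ℕ} (hk : k ≠ 0) (x : ℝ) :
    bern (fun y => y) a b k x = x := by
  have hnodes : (fun i : ℕ => a + (i / k : ℝ) * (b - a)) = fun i : ℕ => a + i * ((b - a) / k) := by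
    funext i
    ring
  rw [bern_eq_eval_bernsteinSum _ hab, hnodes, bernsteinSum_affine]
  simp only [eval_add, eval_mul, eval_C, eval_X]
  field_simp [sub_ne_zero.2 hab.symm]
  ring

theorem relu_monotone : Monotone relu := fun _ _ h => max_le_max_right 0 h

theorem relu_of_nonpos {y : ℝ} (hy : y ≤ 0) : relu y = 0 := max_eq_right hy

theorem relu_of_nonneg {y : ℝ} (hy : 0 ≤ y) : relu y = y := max_eq_left hy

theorem relu_eq_add_relu_neg (y : ℝ) : relu y = y + relu (-y) := by
  rcases le_total y 0 with h | h <;> simp [relu, h]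

theorem bern_relu_eq_add_bern_relu_neg {a b : ℝ} (hab : a ≠ b) {k : ℕ} (hk : k ≠ 0) (x : ℝ) :
    bern relu a b k x = x + bern (fun y => relu (-y)) a b k x := by
  conv_lhs => rw [show relu = fun y => y + relu (-y) from funext relu_eq_add_relu_neg]
  rw [bern_add, bern_id hab hk]

theorem bernstein_relu_diff_le (a b : ℝ) (k : ℕ) (ha : a < 0) (hb : 0 < b) (hk : 1 ≤ k) :
    ∀ x ∈ Icc a b, bern relu a b k x - relu x ≤ bern relu a b k 0 := by
  have hab : a < b := ha.trans hb
  have hk0 : k ≠ 0 := Nat.one_le_iff_ne_zero.1 hk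
  have h0 : (0 : ℝ) ∈ Icc a b := ⟨ha.le, hb.le⟩
  intro x hx
  rcases le_total x 0 with hx0 | hx0
  · calc bern relu a b k x - relu x = bern relu a b k x := by
          rw [relu_of_nonpos hx0, sub_zero]
      _ ≤ bern relu a b k 0 := bern_monotoneOn relu_monotone hab k hx h0 hx0
  · calc bern relu a b k x - relu x = bern (fun y => relu (-y)) a b k x := by
          rw [bern_relu_eq_add_bern_relu_neg hab.ne hk0, relu_of_nonneg hx0, add_sub_cancel_left]
      _ ≤ bern (fun y => relu (-y)) a b k 0 :=
          bern_antitoneOn (relu_monotone.comp_antitone fun _ _ h => neg_le_neg h) hab k h0 hx hx0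
      _ = bern relu a b k 0 := by rw [bern_relu_eq_add_bern_relu_neg hab.ne hk0, zero_add]
end

section
/- The Bernstein polynomial of a convex function on [a,b] is itself convex on [a,b]. -/
open Set

/-! With `t = (x - a) / (b - a)` and nodes `c i = f (a + i (b - a) / k)`, the Bernstein polynomial
is `∑ c i · b_{k,i}(t)` in the Bernstein basis. Differentiating twice in `t` gives
`k (k - 1) ∑ Δ²c i · b_{k-2,i}(t)`: the second differences of the node values are nonnegative
because `f` is convex and the nodes are equally spaced, and the basis is nonnegative on `[0, 1]`. -/

open Polynomial
open scoped fwdDiff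

theorem Polynomial.convexOn_eval_of_eval_derivative_derivative_nonneg {p : ℝ[X]} {D : Set ℝ}
    (hD : Convex ℝ D) (h : ∀ x ∈ D, 0 ≤ (derivative (derivative p)).eval x) :
    ConvexOn ℝ D fun x => p.eval x := by
  have hderiv : _root_.deriv (fun x => p.eval x) = fun x => (derivative p).eval x := by
    ext x
    exact p.deriv
  refine convexOn_of_deriv2_nonneg' hD p.differentiableOn ?_ ?_
  · rw [hderiv]
    exact (derivative p).differentiableOn
  · simpa [hderiv] using h

theorem ConvexOn.comp_sub_div_Icc {g : ℝ → ℝ} {a b : ℝ} (hab : a < b)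
    (hg : ConvexOn ℝ (Icc 0 1) g) :
    ConvexOn ℝ (Icc a b) fun x => g ((x - a) / (b - a)) := by
  let φ : ℝ →ᵃ[ℝ] ℝ :=
    { toFun := fun x => (x - a) / (b - a)
      linear := (b - a)⁻¹ • LinearMap.id
      map_vadd' := fun p v => by
        simp only [vadd_eq_add, LinearMap.smul_apply, LinearMap.id_coe, id_eq, smul_eq_mul]
        ring }
  have hpre : φ ⁻¹' Icc 0 1 = Icc a b := by
    ext x
    have hba : 0 < b - a := sub_pos.2 hab
    simp only [mem_preimage, mem_Icc, φ, AffineMap.coe_mk, le_div_iff₀ hba, div_le_iff₀ hba,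
      zero_mul, one_mul, sub_nonneg, sub_le_sub_iff_right]
  have hcomp := hg.comp_affineMap φ
  rwa [hpre] at hcomp

theorem ConvexOn.fwdDiff_fwdDiff_nonneg {s : Set ℝ} {f : ℝ → ℝ} (hf : ConvexOn ℝ s f)
    {x₀ h : ℝ} {i : ℕ} (hi : x₀ + i * h ∈ s) (hi₂ : x₀ + (i + 2) * h ∈ s) :
    0 ≤ Δ_[1] (Δ_[1] fun j : ℕ => f (x₀ + j * h)) i := by
  have hmid := hf.2 hi hi₂ (by norm_num : (0 : ℝ) ≤ 1 / 2) (by norm_num : (0 : ℝ) ≤ 1 / 2)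
    (by norm_num)
  have hmidpoint : (1/2 : ℝ) • (x₀ + i * h) + (1/2 : ℝ) • (x₀ + (i + 2) * h) =
      x₀ + (i + 1) * h := by
    simp only [smul_eq_mul]
    ring
  rw [hmidpoint, smul_eq_mul, smul_eq_mul] at hmid
  simp only [fwdDiff]
  push_cast
  rw [show (i : ℝ) + 1 + 1 = i + 2 by ring]
  linarith

noncomputable def bernsteinCombination {R : Type*} [CommRing R] (k : ℕ) (c : ℕ → R) : R[X] :=
  ∑ i ∈ Finset.range (k + 1), C (c i) * bernsteinPolynomial R k i

namespace bernsteinCombination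

variable {R : Type*} [CommRing R]

theorem derivative_zero (c : ℕ → R) : derivative (bernsteinCombination 0 c) = 0 := by
  simp [bernsteinCombination, bernsteinPolynomial]

theorem derivative_succ (k : ℕ) (c : ℕ → R) :
    derivative (bernsteinCombination (k + 1) c) =
      (k + 1) * bernsteinCombination k (Δ_[1] c) := by
  set B := bernsteinPolynomial R k
  have hshift : ∑ i ∈ Finset.range (k + 1), C (c (i + 1)) * B (i + 1) + C (c 0) * B 0 =
      ∑ i ∈ Finset.range (k + 1), C (c i) * B i := by
    rw [← Finset.sum_range_succ' (fun i => C (c i) * B i), Finset.sum_range_succ,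
      show B (k + 1) = 0 from bernsteinPolynomial.eq_zero_of_lt R k.lt_succ_self, mul_zero,
      add_zero]
  have hderiv : derivative (bernsteinCombination (k + 1) c) = (k + 1) *
      (∑ i ∈ Finset.range (k + 1), C (c (i + 1)) * B i -
        (∑ i ∈ Finset.range (k + 1), C (c (i + 1)) * B (i + 1) + C (c 0) * B 0)) := by
    rw [bernsteinCombination, Finset.sum_range_succ', derivative_add, derivative_sum]
    simp only [derivative_C_mul, bernsteinPolynomial.derivative_succ_aux,
      bernsteinPolynomial.derivative_zero, Nat.add_sub_cancel, mul_left_comm (C _),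
      ← Finset.mul_sum, mul_sub, Finset.sum_sub_distrib, B]
    push_cast
    ring
  have hdiff : bernsteinCombination k (Δ_[1] c) =
      ∑ i ∈ Finset.range (k + 1), C (c (i + 1)) * B i -
        ∑ i ∈ Finset.range (k + 1), C (c i) * B i := by
    simp only [bernsteinCombination, fwdDiff, C_sub, sub_mul, Finset.sum_sub_distrib, B]
  rw [hderiv, hdiff, hshift]

theorem derivative_derivative_succ_succ (k : ℕ) (c : ℕ → R) :
    derivative (derivative (bernsteinCombination (k + 2) c)) =
      ((k + 2) * (k + 1)) * bernsteinCombination k (Δ_[1] (Δ_[1] c)) := by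
  rw [derivative_succ, derivative_mul, derivative_succ]
  simp only [derivative_add, derivative_natCast, derivative_one]
  push_cast
  ring

theorem eval_nonneg {k : ℕ} {c : ℕ → ℝ} (hc : ∀ i ≤ k, 0 ≤ c i) {x : ℝ}
    (hx : x ∈ Icc 0 1) :
    0 ≤ (bernsteinCombination k c).eval x := by
  simp only [bernsteinCombination, eval_finsetSum, eval_mul, eval_C, bernsteinPolynomial,
    eval_pow, eval_sub, eval_one, eval_X, eval_natCast]
  refine Finset.sum_nonneg fun i hi => mul_nonneg (hc i (Finset.mem_range_succ_iff.mp hi)) ?_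
  exact mul_nonneg (mul_nonneg (Nat.cast_nonneg _) (pow_nonneg hx.1 _))
    (pow_nonneg (sub_nonneg.2 hx.2) _)

theorem convexOn_eval {k : ℕ} {c : ℕ → ℝ}
    (hc : ∀ i, i + 2 ≤ k → 0 ≤ Δ_[1] (Δ_[1] c) i) :
    ConvexOn ℝ (Icc 0 1) fun x => (bernsteinCombination k c).eval x := by
  refine convexOn_eval_of_eval_derivative_derivative_nonneg (convex_Icc 0 1) fun x hx => ?_
  obtain _ | _ | k := k
  · simp [derivative_zero]
  · simp [derivative_succ, derivative_zero]
  · rw [derivative_derivative_succ_succ, eval_mul]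
    refine mul_nonneg ?_ (eval_nonneg (fun i hi => hc i (by omega)) hx)
    simp only [eval_mul, eval_add, eval_natCast, eval_ofNat, eval_one]
    positivity

end bernsteinCombination

theorem bern_eq_eval_bernsteinCombination (f : ℝ → ℝ) {a b : ℝ} (hab : a ≠ b) (k : ℕ)
    (x : ℝ) :
    bern f a b k x =
      (bernsteinCombination k fun i => f (a + i * ((b - a) / k))).eval ((x - a) / (b - a)) := by
  have hflip : 1 - (x - a) / (b - a) = (b - x) / (b - a) := by
    field_simp [sub_ne_zero.2 hab.symm]
    ring
  simp only [bern, bernsteinCombination, eval_finsetSum, eval_mul, eval_C, bernsteinPolynomial,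
    eval_pow, eval_sub, eval_one, eval_X, eval_natCast, hflip]
  refine Finset.sum_congr rfl fun i _ => ?_
  rw [div_mul_comm, mul_comm ((b - a) / k)]
  ring

theorem bernstein_convexOn_general (f : ℝ → ℝ) (a b : ℝ) (k : ℕ)
    (hab : a < b)
    (hconv : ConvexOn ℝ (Icc a b) f) :
    ConvexOn ℝ (Icc a b) (bern f a b k) := by
  have hnode : ∀ i ≤ k, a + i * ((b - a) / k) ∈ Icc a b := by
    intro i hi
    have hik : (i : ℝ) / k ≤ 1 := div_le_one_of_le₀ (by exact_mod_cast hi) k.cast_nonneg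
    have hba : 0 ≤ b - a := sub_nonneg.2 hab.le
    have hik₀ : 0 ≤ (i : ℝ) / k := by positivity
    rw [mul_div_left_comm]
    constructor <;> nlinarith
  have hcomb := bernsteinCombination.convexOn_eval fun i (hi : i + 2 ≤ k) =>
    hconv.fwdDiff_fwdDiff_nonneg (hnode i (by omega)) (by exact_mod_cast hnode (i + 2) hi)
  convert hcomb.comp_sub_div_Icc hab using 1
  exact funext (bern_eq_eval_bernsteinCombination f hab.ne k)

theorem bernstein_convexOn (f : ℝ → ℝ) (a b : ℝ) (k : ℕ)
    (hab : a < b) (hk : 1 ≤ k)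
    (hcont : ContinuousOn f (Icc a b))
    (hconv : ConvexOn ℝ (Icc a b) f) :
    ConvexOn ℝ (Icc a b) (bern f a b k) :=
  bernstein_convexOn_general f a b k hab hconv
end
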